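/- Let G be a deterministic finite automaton with partial transition function over Σ = Σ_c ∪ Σ_uc, and let H ⊏ G be a strict subautomaton whose state set contains the initial state x0 of G (taken as the initial state of H). If the supremal controllable sublanguage supC(L(H)) of L(H) with respect to L(G) and Σ_uc is nonempty, then there exists a strict subautomaton S ⊏ H (hence also S ⊏ G) whose state set contains x0 such that L(S) = supC(L(H)); in particular, the maximally permissive safe supervisor for G with respect to the state-based specification H is realized by a strict subautomaton of G. -/
import Mathlib


/-!
Common formalization of supervisory control of DES under actuator-enablement
attacks, following the natural-language context.

* A plant is a DFA with partial transition function `f : X → E → Option X`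
  and initial state `x0`; `runFrom` extends `f` to strings; `Lang f x0` is the
  generated language.
* A strict subautomaton of an automaton is represented by its state set
  `Q : Set X`, with induced transition function `subStep f Q`.
* Attacked events are modelled by the alphabet `E ⊕ E`: `Sum.inl e` is the
  ordinary event `e`, `Sum.inr e` is the attacked copy `eᵃ` (meaningful for
  `e ∈ Scv`).
* The attacked plant `gaStep`, attacked supervisor `saStep` (state `none`
  playing the role of the fresh state `A`), and their synchronous composition
  `grStep` (the attacked closed-loop system `G^R = Sa ∥ Ga`) are defined below,
  together with detection states, robust-recovery, the resilient specification
  `Ha`, supervisors for `G^R`, and resilience.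
-/

open Classical List

namespace RobustRec

variable {X : Type*} {E : Type*}

/-- Extension of a partial transition function to strings. -/
def runFrom (f : X → E → Option X) : X → List E → Option X
  | x, [] => some x
  | x, e :: w => (f x e).bind fun y => runFrom f y w

/-- Language generated from state `x0`. -/
def Lang (f : X → E → Option X) (x0 : X) : Set (List E) :=
  {w | (runFrom f x0 w).isSome}

/-- Transition function of the strict (induced) subautomaton with state set `Q`:
a transition is defined iff it is defined in the big automaton and both its
endpoints lie in `Q`. -/
noncomputable def subStep (f : X → E → Option X) (Q : Set X) : X → E → Option X :=
  fun x e => (f x e).bind fun y => if x ∈ Q ∧ y ∈ Q then some y else none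

/-- Vulnerable states: those where some vulnerable controllable event is feasible. -/
def vulnStates (f : X → E → Option X) (Scv : Set E) : Set X :=
  {x | ∃ e ∈ Scv, (f x e).isSome}

/-- A supervisor for the plant `(f, x0)`, represented by its state set `XS`
(the induced strict subautomaton): it contains `x0`, is controllable w.r.t.
the uncontrollable events `Suc`, and is safe w.r.t. the unsafe states `XUS`. -/
structure IsSupervisor (f : X → E → Option X) (x0 : X) (Suc : Set E)
    (XUS : Set X) (XS : Set X) : Prop where
  init_mem : x0 ∈ XS
  controllable : ∀ x ∈ XS, ∀ e ∈ Suc, ∀ y, f x e = some y → y ∈ XS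
  safe : ∀ x ∈ XS, x ∉ XUS

/-- The attacked plant `Ga`: all transitions of `G`, plus, for every transition
on a vulnerable event `σ ∈ Scv`, a parallel transition on its attacked copy. -/
noncomputable def gaStep (f : X → E → Option X) (Scv : Set E) :
    X → E ⊕ E → Option X
  | x, Sum.inl e => f x e
  | x, Sum.inr e => if e ∈ Scv then f x e else none

/-- The attacked supervisor `Sa`: states are `some x` for states `x` of `S`
plus the fresh state `A = none` with a self-loop on every event; for every
state `x` of `S` and `σ ∈ Scv` with `f_S(x,σ)` undefined there is a transition
on `σᵃ` from `x` to `A`. -/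
noncomputable def saStep (f : X → E → Option X) (XS : Set X) (Scv : Set E) :
    Option X → E ⊕ E → Option (Option X)
  | none, _ => some none
  | some x, Sum.inl e => (subStep f XS x e).map some
  | some x, Sum.inr e =>
      if e ∈ Scv ∧ x ∈ XS ∧ subStep f XS x e = none then some none else none

/-- Synchronous composition of two automata over a common alphabet. -/
def prodStep {X1 X2 A : Type*} (f1 : X1 → A → Option X1) (f2 : X2 → A → Option X2) :
    X1 × X2 → A → Option (X1 × X2) :=
  fun p a => (f1 p.1 a).bind fun y1 => (f2 p.2 a).map fun y2 => (y1, y2)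

/-- The attacked closed-loop system `G^R = Sa ∥ Ga`. Its post-attack states are
those of the form `(none, x)`, i.e. `(A, x)`. -/
noncomputable def grStep (f : X → E → Option X) (XS : Set X) (Scv : Set E) :
    Option X × X → E ⊕ E → Option (Option X × X) :=
  prodStep (saStep f XS Scv) (gaStep f Scv)

/-- Initial state of `G^R`. -/
def grInit (x0 : X) : Option X × X := (some x0, x0)

/-- Embedding of strings over `Σ` into strings over `Σ ∪ Σᵃ_{c,v}`. -/
def embed : List E → List (E ⊕ E) := List.map Sum.inl

/-- The language `L(Sa/Ga)` of the attacked closed-loop system. -/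
noncomputable def GRLang (f : X → E → Option X) (x0 : X) (XS : Set X) (Scv : Set E) :
    Set (List (E ⊕ E)) :=
  Lang (grStep f XS Scv) (grInit x0)

/-- The detection language `L_det = {sσ ∈ L(G) | s ∈ L(S/G), σ ∈ Σ_{c,v},
sσᵃ ∈ L(Sa/Ga)}`. -/
noncomputable def detLang (f : X → E → Option X) (x0 : X) (XS : Set X) (Scv : Set E) :
    Set (List E) :=
  {w | ∃ s σ, w = s ++ [σ] ∧ σ ∈ Scv ∧ w ∈ Lang f x0 ∧
        s ∈ Lang (subStep f XS) x0 ∧ embed s ++ [Sum.inr σ] ∈ GRLang f x0 XS Scv}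

/-- The detection states `X_det = {f(x0, sσ) : sσ ∈ L_det}`. -/
noncomputable def detStates (f : X → E → Option X) (x0 : X) (XS : Set X) (Scv : Set E) :
    Set X :=
  {x | ∃ w ∈ detLang f x0 XS Scv, runFrom f x0 w = some x}

/-- `r` is a robust-recovery strategy from `x` relative to the candidate set `R`
of recoverable states, the robust region `XR` and the bad states
`Bad = X_v ∪ X_US`: (1) `r` leads into `XR`; (2) no prefix of `r` visits `Bad`;
(3) no prefix of `r` can uncontrollably reach `Bad`; (4) any one-step
uncontrollable deviation from `r` lands in `R`. -/
def IsRecoveryPath (f : X → E → Option X) (Suc : Set E) (XR Bad : Set X)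
    (R : Set X) (x : X) (r : List E) : Prop :=
  (∃ y ∈ XR, runFrom f x r = some y) ∧
  (∀ t, t <+: r → ∀ y, runFrom f x t = some y → y ∉ Bad) ∧
  (∀ t, t <+: r → ∀ u : List E, (∀ e ∈ u, e ∈ Suc) →
      ∀ y, runFrom f x (t ++ u) = some y → y ∉ Bad) ∧
  (∀ t, t <+: r → ∀ e ∈ Suc, ∀ y, runFrom f x (t ++ [e]) = some y →
      ¬ (t ++ [e]) <+: r → y ∈ R)

/-- The set `R` of AE-robust recoverable states: the largest subset of
`X \ Bad` each of whose elements admits a robust-recovery strategy (relative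
to the set itself). -/
def recSet (f : X → E → Option X) (Suc : Set E) (XR Bad : Set X) : Set X :=
  ⋃₀ {R | R ⊆ Badᶜ ∧ ∀ x ∈ R, ∃ r, IsRecoveryPath f Suc XR Bad R x r}

/-- The attacked system `Sa/Ga` is AE-robust recoverable w.r.t. the robust
region `XR` if every detection state is AE-robust recoverable. -/
noncomputable def AERobustRecoverable (f : X → E → Option X) (x0 : X)
    (Suc Scv : Set E) (XUS XS XR : Set X) : Prop :=
  detStates f x0 XS Scv ⊆ recSet f Suc XR (vulnStates f Scv ∪ XUS)

/-- Reachable states of `G^R` (the state set of the synchronous composition). -/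
noncomputable def grStates (f : X → E → Option X) (x0 : X) (XS : Set X) (Scv : Set E) :
    Set (Option X × X) :=
  {p | ∃ w, runFrom (grStep f XS Scv) (grInit x0) w = some p}

/-- A supervisor for `G^R`, represented by its state set `Q` (inducing a strict
subautomaton of `G^R`): it contains the initial state and is controllable
w.r.t. `Suc` (attacked events being controllable). -/
structure IsGRSupervisor (f : X → E → Option X) (x0 : X) (Suc Scv : Set E)
    (XS : Set X) (Q : Set (Option X × X)) : Prop where
  subset : Q ⊆ grStates f x0 XS Scv
  init_mem : grInit x0 ∈ Q
  controllable : ∀ p ∈ Q, ∀ e ∈ Suc, ∀ q, grStep f XS Scv p (Sum.inl e) = some q → q ∈ Q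

/-- State set of the resilient specification `Ha`: `G^R` minus every post-attack
state `(A, x)` with `x ∈ X_v ∪ X_US`. -/
def haCarrier (f : X → E → Option X) (Scv : Set E) (XUS : Set X) :
    Set (Option X × X) :=
  {p | ¬ (p.1 = none ∧ p.2 ∈ vulnStates f Scv ∪ XUS)}

/-- Marked states of `Ha`: post-attack states `(A, x)` with `x` in the robust
region. -/
def haMarked (XR : Set X) : Set (Option X × X) :=
  {p | p.1 = (none : Option X) ∧ p.2 ∈ XR}

/-- The closed-loop language `L(S^R/G^R) = L(S^R)` of a supervisor `Q` for `G^R`. -/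
noncomputable def SRLang (f : X → E → Option X) (x0 : X) (XS : Set X) (Scv : Set E)
    (Q : Set (Option X × X)) : Set (List (E ⊕ E)) :=
  Lang (subStep (grStep f XS Scv) Q) (grInit x0)

/-- `S^R` is safe w.r.t. the resilient specification `Ha`: `L(S^R) ⊆ L(Ha)`. -/
noncomputable def SafeWrtHa (f : X → E → Option X) (x0 : X) (XS : Set X)
    (Scv : Set E) (XUS : Set X) (Q : Set (Option X × X)) : Prop :=
  SRLang f x0 XS Scv Q ⊆
    Lang (subStep (grStep f XS Scv) (haCarrier f Scv XUS)) (grInit x0)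

/-- `S^R` is nonblocking: from every post-attack state of `S^R`, a marked state
of `Ha` is reachable within `S^R`. -/
noncomputable def NonblockingSR (f : X → E → Option X) (XS : Set X) (Scv : Set E)
    (XR : Set X) (Q : Set (Option X × X)) : Prop :=
  ∀ p ∈ Q, p.1 = (none : Option X) →
    ∃ w q, runFrom (subStep (grStep f XS Scv) Q) p w = some q ∧ q ∈ haMarked XR

/-- `S^R` is maximally permissive among safe nonblocking supervisors for `G^R`. -/
noncomputable def MaxPermissive (f : X → E → Option X) (x0 : X) (Suc Scv : Set E)
    (XS XUS XR : Set X) (Q : Set (Option X × X)) : Prop :=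
  ∀ Q', IsGRSupervisor f x0 Suc Scv XS Q' → SafeWrtHa f x0 XS Scv XUS Q' →
    NonblockingSR f XS Scv XR Q' → SRLang f x0 XS Scv Q' ⊆ SRLang f x0 XS Scv Q

/-- `S^R` (given by its state set `Q`) is resilient w.r.t. `Scv` and the robust
region `XR`: it permits the full nominal behavior `L(S/G)`, and after any
AE-attack `sσᵃ` feasible in `L(Sa/Ga)` it permits the attack, keeps all its
subsequent behavior out of `Bad = X_v ∪ X_US`, and can always be extended
within `L(S^R)` to reach a post-attack state `(A, x)` with `x ∈ XR`; i.e. it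
enforces a robust-recovery strategy from the detection state. -/
noncomputable def ResilientSup (f : X → E → Option X) (x0 : X) (Scv : Set E)
    (XS XR Bad : Set X) (Q : Set (Option X × X)) : Prop :=
  (∀ s ∈ Lang (subStep f XS) x0, embed s ∈ SRLang f x0 XS Scv Q) ∧
  ∀ s : List E, embed s ∈ SRLang f x0 XS Scv Q →
    ∀ σ ∈ Scv, embed s ++ [Sum.inr σ] ∈ GRLang f x0 XS Scv →
      embed s ++ [Sum.inr σ] ∈ SRLang f x0 XS Scv Q ∧
      ∀ t : List E, embed s ++ [Sum.inr σ] ++ embed t ∈ SRLang f x0 XS Scv Q →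
        (∀ t', t' <+: t → ∀ y, runFrom f x0 (s ++ σ :: t') = some y →
            y ∉ Bad) ∧
        ∃ u q, runFrom (subStep (grStep f XS Scv) Q) (grInit x0)
                 (embed s ++ [Sum.inr σ] ++ embed t ++ u) = some q ∧
               q.1 = (none : Option X) ∧ q.2 ∈ XR

/-- A prefix-closed language. -/
def PrefixClosed (K : Set (List E)) : Prop := ∀ s t : List E, s ++ t ∈ K → s ∈ K

/-- `K` is controllable w.r.t. the language `M` and uncontrollable events `Suc`. -/
def ControllableLang (K M : Set (List E)) (Suc : Set E) : Prop :=
  ∀ s ∈ K, ∀ e ∈ Suc, s ++ [e] ∈ M → s ++ [e] ∈ K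

/-- The supremal controllable (prefix-closed) sublanguage of `M` w.r.t. `LG`. -/
def supC (M LG : Set (List E)) (Suc : Set E) : Set (List E) :=
  ⋃₀ {K | K ⊆ M ∧ PrefixClosed K ∧ ControllableLang K LG Suc}

theorem runFrom_append (f : X → E → Option X) (x : X) (s t : List E) :
    runFrom f x (s ++ t) = (runFrom f x s).bind fun y => runFrom f y t := by
  induction s generalizing x with
  | nil => simp [runFrom]
  | cons e s ih =>
    simp only [List.cons_append, runFrom]
    cases f x e with
    | none => simp
    | some y => simp [ih]

theorem runFrom_singleton (f : X → E → Option X) (x : X) (e : E) :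
    runFrom f x [e] = f x e := by
  cases h : f x e <;> simp [runFrom, h]

theorem runFrom_append_singleton (f : X → E → Option X) (x : X) (w : List E) (e : E) :
    runFrom f x (w ++ [e]) = (runFrom f x w).bind fun y => f y e := by
  rw [runFrom_append]
  congr 1
  funext y
  exact runFrom_singleton f y e

theorem subStep_some {f : X → E → Option X} {Q : Set X} {x y : X} {e : E} :
    subStep f Q x e = some y ↔ f x e = some y ∧ x ∈ Q ∧ y ∈ Q := by
  simp only [subStep]
  cases h : f x e with
  | none => simp
  | some z =>
    simp only [Option.bind_some, Option.some.injEq]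
    split_ifs with hq
    · simp only [Option.some.injEq]
      constructor
      · rintro rfl; exact ⟨rfl, hq⟩
      · rintro ⟨rfl, _, _⟩; rfl
    · constructor
      · intro h'; exact absurd h' (by simp)
      · rintro ⟨rfl, hx', hy'⟩; exact absurd ⟨hx', hy'⟩ hq

theorem runFrom_subStep_some {f : X → E → Option X} {Q : Set X} {x y : X}
    {w : List E} (h : runFrom (subStep f Q) x w = some y) :
    runFrom f x w = some y := by
  induction w generalizing x with
  | nil => exact h
  | cons e w ih =>
    simp only [runFrom] at h ⊢
    cases hs : subStep f Q x e with
    | none => rw [hs] at h; simp at h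
    | some z =>
      rw [hs] at h
      simp only [Option.bind_some] at h
      rw [(subStep_some.mp hs).1]
      exact ih h

theorem runFrom_subStep_mem {f : X → E → Option X} {Q : Set X} {x y : X}
    {w : List E} (h : runFrom (subStep f Q) x w = some y) (hx : x ∈ Q) :
    y ∈ Q := by
  induction w generalizing x with
  | nil => cases h; exact hx
  | cons e w ih =>
    simp only [runFrom] at h
    cases hs : subStep f Q x e with
    | none => rw [hs] at h; simp at h
    | some z =>
      rw [hs] at h
      simp only [Option.bind_some] at h
      exact ih h (subStep_some.mp hs).2.2

theorem lang_prefixClosed (f : X → E → Option X) (x0 : X) :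
    PrefixClosed (Lang f x0) := by
  intro s t hst
  simp only [Lang, Set.mem_setOf_eq, runFrom_append] at hst ⊢
  cases h : runFrom f x0 s with
  | none => rw [h] at hst; simp at hst
  | some y => simp

end RobustRec

/-- Let `H ⊏ G` be a strict subautomaton (induced by the state
set `QH`) containing the initial state `x0`. If the supremal controllable
sublanguage `supC(L(H))` of `L(H)` w.r.t. `L(G)` and `Σ_uc` is nonempty, then
there is a strict subautomaton `S ⊏ H` (induced by a state set `Q ⊆ QH`)
containing `x0` with `L(S) = supC(L(H))`: the maximally permissive safe
supervisor for the state-based specification `H` is realized by a strict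
subautomaton of `G`. -/
theorem RobustRec.supC_realized_by_strict_subautomaton
    {X E : Type*} [Fintype X] [Fintype E]
    (f : X → E → Option X) (x0 : X) (Sc Suc : Set E)
    (hdisj : Sc ∩ Suc = ∅) (hcover : Sc ∪ Suc = Set.univ)
    (QH : Set X) (hx0 : x0 ∈ QH)
    (hne : (supC (Lang (subStep f QH) x0) (Lang f x0) Suc).Nonempty) :
    ∃ Q : Set X, Q ⊆ QH ∧ x0 ∈ Q ∧
      Lang (subStep (subStep f QH) Q) x0 =
        supC (Lang (subStep f QH) x0) (Lang f x0) Suc := by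
  classical
  set g := subStep f QH with hg
  set M := Lang g x0 with hM
  set LG := Lang f x0 with hLG
  set K := supC M LG Suc with hK
  have hKsub : K ⊆ M := by
    rintro s ⟨K', ⟨h1, _, _⟩, hs⟩; exact h1 hs
  have hKpc : PrefixClosed K := by
    rintro s t ⟨K', ⟨h1, h2, h3⟩, hs⟩
    exact ⟨K', ⟨h1, h2, h3⟩, h2 s t hs⟩
  have hKc : ControllableLang K LG Suc := by
    rintro s ⟨K', ⟨h1, h2, h3⟩, hs⟩ e he hse
    exact ⟨K', ⟨h1, h2, h3⟩, h3 s hs e he hse⟩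
  have hnil : ([] : List E) ∈ K := by
    obtain ⟨w, hw⟩ := hne
    exact hKpc [] w hw
  set Q : Set X := {x | ∃ s ∈ K, runFrom g x0 s = some x} with hQ
  have hx0Q : x0 ∈ Q := ⟨[], hnil, rfl⟩
  -- key claim: strings in K run in the small automaton
  have key : ∀ s ∈ K, ∃ x, runFrom (subStep g Q) x0 s = some x ∧
      runFrom g x0 s = some x := by
    intro s
    induction s using List.reverseRecOn with
    | nil => intro _; exact ⟨x0, rfl, rfl⟩
    | append_singleton t e ih =>
      intro hs
      obtain ⟨x, hx1, hx2⟩ := ih (hKpc t [e] hs)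
      have hsM : t ++ [e] ∈ M := hKsub hs
      simp only [hM, Lang, Set.mem_setOf_eq, runFrom_append_singleton, hx2,
        Option.bind_some] at hsM
      cases hge : g x e with
      | none => rw [hge] at hsM; simp at hsM
      | some y =>
        have hyQ : y ∈ Q := by
          refine ⟨t ++ [e], hs, ?_⟩
          rw [runFrom_append_singleton, hx2, Option.bind_some, hge]
        have hxQ : x ∈ Q := ⟨t, hKpc t [e] hs, hx2⟩
        have hsub : subStep g Q x e = some y := subStep_some.mpr ⟨hge, hxQ, hyQ⟩
        refine ⟨y, ?_, ?_⟩
        · rw [runFrom_append_singleton, hx1, Option.bind_some, hsub]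
        · rw [runFrom_append_singleton, hx2, Option.bind_some, hge]
  refine ⟨Q, ?_, hx0Q, ?_⟩
  · -- Q ⊆ QH
    rintro x ⟨s, hs, hrun⟩
    exact runFrom_subStep_mem hrun hx0
  · -- language equality
    apply Set.Subset.antisymm
    · -- L(S) ⊆ K : L(S) is itself in the family
      intro s hsL
      refine ⟨Lang (subStep g Q) x0, ⟨?_, lang_prefixClosed _ _, ?_⟩, hsL⟩
      · intro w hw
        simp only [Lang, Set.mem_setOf_eq] at hw ⊢
        obtain ⟨x, hx⟩ := Option.isSome_iff_exists.mp hw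
        simp only [hM, Lang, Set.mem_setOf_eq, runFrom_subStep_some hx,
          Option.isSome_some]
      · -- controllability of L(S)
        intro w hw e he hwG
        simp only [Lang, Set.mem_setOf_eq] at hw hwG ⊢
        obtain ⟨x, hx⟩ := Option.isSome_iff_exists.mp hw
        have hxQ : x ∈ Q := runFrom_subStep_mem hx hx0Q
        have hwgx : runFrom g x0 w = some x := runFrom_subStep_some hx
        have hwfx : runFrom f x0 w = some x := runFrom_subStep_some hwgx
        rw [hLG] at hwG
        simp only [Lang, Set.mem_setOf_eq, runFrom_append_singleton, hwfx,
          Option.bind_some] at hwG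
        obtain ⟨y, hfy⟩ := Option.isSome_iff_exists.mp hwG
        obtain ⟨t, htK, htrun⟩ := hxQ
        have htfx : runFrom f x0 t = some x := runFrom_subStep_some htrun
        have hteG : t ++ [e] ∈ LG := by
          simp only [hLG, Lang, Set.mem_setOf_eq, runFrom_append_singleton,
            htfx, Option.bind_some, hfy, Option.isSome_some]
        have hteK : t ++ [e] ∈ K := hKc t htK e he hteG
        have hteM : t ++ [e] ∈ M := hKsub hteK
        simp only [hM, Lang, Set.mem_setOf_eq, runFrom_append_singleton, htrun,
          Option.bind_some] at hteM
        obtain ⟨y', hgy⟩ := Option.isSome_iff_exists.mp hteM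
        have hyy : y' = y := by
          have h1 := (subStep_some.mp hgy).1
          rw [hfy] at h1
          exact Option.some_inj.mp h1.symm
        subst hyy
        have hy'Q : y' ∈ Q := by
          refine ⟨t ++ [e], hteK, ?_⟩
          rw [runFrom_append_singleton, htrun, Option.bind_some, hgy]
        have hxQ' : x ∈ Q := ⟨t, htK, htrun⟩
        have hsub : subStep g Q x e = some y' :=
          subStep_some.mpr ⟨hgy, hxQ', hy'Q⟩
        rw [runFrom_append_singleton, hx, Option.bind_some, hsub]
        exact Option.isSome_some
    · -- K ⊆ L(S)
      intro s hs
      obtain ⟨x, hx1, _⟩ := key s hs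
      simp only [Lang, Set.mem_setOf_eq, hx1, Option.isSome_some]
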